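/- arXiv:1009.2929 — 4 statements merged into one kernel-verified Lean document; each statement's English description precedes it below -/
import Mathlib

section
/- For all integers m, n ≥ 0, Σ_{j=0}^{m} s(m,j) B_{j+n}(x) = x^m · Σ_{j=0}^{n} C(n,j) B_j(x) m^{n-j} as polynomials in x. -/
open Polynomial Finset

/-- Stirling numbers of the second kind. -/
def stirling2 : ℕ → ℕ → ℕ
  | 0, 0 => 1
  | 0, _ + 1 => 0
  | _ + 1, 0 => 0
  | n + 1, k + 1 => (k + 1) * stirling2 n (k + 1) + stirling2 n k

/-- Signed Stirling numbers of the first kind. -/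
def stirling1 : ℕ → ℕ → ℤ
  | 0, 0 => 1
  | 0, _ + 1 => 0
  | n + 1, 0 => -(n : ℤ) * stirling1 n 0
  | n + 1, k + 1 => stirling1 n k - (n : ℤ) * stirling1 n (k + 1)

/-- The Bell polynomial `B_m(x) = ∑_{j=0}^m S(m,j) x^j` over `ℤ`. -/
noncomputable def bellPoly (m : ℕ) : Polynomial ℤ :=
  ∑ j ∈ range (m + 1), (stirling2 m j : ℤ) • X ^ j

/-- The derangement polynomial `D_m(x) = ∑_{j=0}^m C(m,j) j! (x-1)^{m-j}` over `ℤ`. -/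
noncomputable def derPoly (m : ℕ) : Polynomial ℤ :=
  ∑ j ∈ range (m + 1), ((m.choose j * j.factorial : ℕ) : ℤ) • (X - 1) ^ (m - j)

/-- The Bell numbers `B_m = ∑_j S(m,j)`. -/
def bell (m : ℕ) : ℕ := ∑ j ∈ range (m + 1), stirling2 m j


/-! Touchard's recurrence `B_{k+1} = X (B_k + B_k')` says `B_k = θ^k 1` for `θ = X (1 + d/dX)`.
The left side is therefore `θ^n` applied to `∑_j s(m,j) θ^j 1 = θ(θ-1)⋯(θ-m+1) 1`, which is `X^m`
because `(θ - k) X^k = X^(k+1)`. The commutation rule `θ (X^m p) = X^m (θ + m) p` then gives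
`θ^n X^m = X^m (θ + m)^n 1`, and expanding `(θ + m)^n` binomially yields the right side. -/

section Touchard

variable (R : Type*) [CommSemiring R]

noncomputable def touchardOp : Module.End R R[X] :=
  LinearMap.mulLeft R X ∘ₗ (LinearMap.id + derivative)

variable {R}

theorem touchardOp_apply (p : R[X]) : touchardOp R p = X * (p + derivative p) := rfl

theorem touchardOp_X_pow_mul (m : ℕ) (p : R[X]) :
    touchardOp R (X ^ m * p) = X ^ m * (touchardOp R p + m • p) := by
  simp only [touchardOp_apply, derivative_mul, derivative_X_pow]
  rcases m with _ | k
  · simp only [pow_zero, Nat.cast_zero, map_zero, zero_mul, zero_smul]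
    ring
  · simp only [nsmul_eq_mul, Nat.add_sub_cancel, ← C_eq_natCast, pow_succ]
    ring

theorem semiconjBy_mulLeft_X_pow_touchardOp (m : ℕ) :
    SemiconjBy (LinearMap.mulLeft R (X ^ m)) (touchardOp R + (m : Module.End R R[X]))
      (touchardOp R) :=
  LinearMap.ext fun p => (touchardOp_X_pow_mul m p).symm

theorem touchardOp_pow_X_pow_mul (m n : ℕ) (p : R[X]) :
    (touchardOp R ^ n) (X ^ m * p) = X ^ m * ((touchardOp R + (m : Module.End R R[X])) ^ n) p :=
  (LinearMap.congr_fun ((semiconjBy_mulLeft_X_pow_touchardOp m).pow_right n) p).symm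

theorem aeval_descPochhammer_touchardOp_one {R : Type*} [CommRing R] (m : ℕ) :
    aeval (touchardOp R) (descPochhammer R m) 1 = X ^ m := by
  induction m with
  | zero => simp
  | succ m ih =>
    have h := touchardOp_X_pow_mul (R := R) m 1
    rw [mul_one] at h
    rw [descPochhammer_succ_right, mul_comm, map_mul, Module.End.mul_apply, ih]
    simp only [map_sub, aeval_X, map_natCast, LinearMap.sub_apply, Module.End.natCast_apply, h,
      touchardOp_apply, derivative_one, add_zero, mul_one]
    ring

end Touchard

theorem stirling2_eq_zero_of_lt : ∀ {m k : ℕ}, m < k → stirling2 m k = 0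
  | 0, _ + 1, _ => rfl
  | m + 1, k + 1, h => by
    rw [stirling2, stirling2_eq_zero_of_lt (by omega), stirling2_eq_zero_of_lt (by omega), mul_zero]

theorem coeff_bellPoly (m k : ℕ) : (bellPoly m).coeff k = stirling2 m k := by
  rw [bellPoly, finsetSum_coeff]
  simp_rw [coeff_smul, coeff_X_pow, smul_eq_mul, mul_ite, mul_one, mul_zero]
  rw [sum_ite_eq]
  split_ifs with h
  · rfl
  · rw [stirling2_eq_zero_of_lt (by simpa using h), Nat.cast_zero]

theorem bellPoly_succ (m : ℕ) : bellPoly (m + 1) = touchardOp ℤ (bellPoly m) := by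
  ext (_ | k)
  · simp [touchardOp_apply, coeff_bellPoly, stirling2]
  · rw [touchardOp_apply, coeff_bellPoly, mul_comm, coeff_mul_X, coeff_add, coeff_bellPoly,
      coeff_derivative, coeff_bellPoly, stirling2]
    push_cast
    ring

theorem bellPoly_add (j n : ℕ) : bellPoly (j + n) = (touchardOp ℤ ^ n) (bellPoly j) := by
  induction n with
  | zero => rfl
  | succ n ih => rw [← add_assoc, bellPoly_succ, ih, pow_succ', Module.End.mul_apply]

theorem bellPoly_eq_touchardOp_pow_one (n : ℕ) : bellPoly n = (touchardOp ℤ ^ n) 1 := by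
  rw [← zero_add n, bellPoly_add]
  simp [bellPoly, stirling2]

theorem coeff_descPochhammer_int (m j : ℕ) : (descPochhammer ℤ m).coeff j = stirling1 m j := by
  induction m generalizing j with
  | zero => rcases j with _ | j <;> simp [stirling1, coeff_one]
  | succ m ih =>
    rw [descPochhammer_succ_right, ← C_eq_natCast]
    rcases j with _ | j
    · simp [mul_coeff_zero, ih, stirling1, mul_comm]
    · rw [coeff_mul_X_sub_C, ih, ih, stirling1]
      ring

theorem sum_stirling1_mul_bellPoly (m : ℕ) :
    ∑ j ∈ range (m + 1), C (stirling1 m j) * bellPoly j = X ^ m := by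
  rw [← aeval_descPochhammer_touchardOp_one, aeval_eq_sum_range' (n := m + 1) (by simp),
    LinearMap.sum_apply]
  refine sum_congr rfl fun j _ => ?_
  rw [coeff_descPochhammer_int, LinearMap.smul_apply, ← bellPoly_eq_touchardOp_pow_one,
    smul_eq_C_mul]

theorem touchardOp_add_natCast_pow_one (m n : ℕ) :
    ((touchardOp ℤ + (m : Module.End ℤ ℤ[X])) ^ n) 1 =
      ∑ j ∈ range (n + 1), (n.choose j : ℤ) • (bellPoly j * (m : ℤ[X]) ^ (n - j)) := by
  rw [(Nat.cast_commute m (touchardOp ℤ)).symm.add_pow, LinearMap.sum_apply]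
  refine sum_congr rfl fun j _ => ?_
  rw [← Nat.cast_pow]
  simp only [Module.End.mul_apply, Module.End.natCast_apply, map_nsmul,
    ← bellPoly_eq_touchardOp_pow_one]
  simp only [nsmul_eq_mul, zsmul_eq_mul, Nat.cast_pow, Int.cast_natCast]
  ring

theorem stirling1_bellPoly_shift (m n : ℕ) :
    ∑ j ∈ range (m + 1), C (stirling1 m j) * bellPoly (j + n) =
      X ^ m * ∑ j ∈ range (n + 1), (n.choose j : ℤ) • (bellPoly j * (m : Polynomial ℤ) ^ (n - j)) := by
  calc ∑ j ∈ range (m + 1), C (stirling1 m j) * bellPoly (j + n)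
      = (touchardOp ℤ ^ n) (∑ j ∈ range (m + 1), C (stirling1 m j) * bellPoly j) := by
        simp only [bellPoly_add, map_sum, ← smul_eq_C_mul, map_zsmul]
    _ = (touchardOp ℤ ^ n) (X ^ m * 1) := by rw [sum_stirling1_mul_bellPoly, mul_one]
    _ = _ := by rw [touchardOp_pow_X_pow_mul, touchardOp_add_natCast_pow_one]
end

section
/- For every integer m ≥ 1, Σ_{j=1}^{m} s(m,j) B_{j-1} = (-1)^{m-1} D_{m-1}, where B_k is the k-th Bell number and D_k is the k-th derangement number. -/
open Polynomial Finset

/-!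
Since `B_j = ∑_k S(j,k)`, the orthogonality of the two kinds of Stirling numbers gives
`∑_j s(n,j) B_j = 1` for every `n`. Feeding this into the recurrence
`s(n+1,j+1) = s(n,j) - n s(n,j+1)` shows that `a_n = ∑_j s(n+1,j+1) B_j` satisfies
`a_n = 1 - n a_{n-1}`, which is also the recurrence of `(-1)^n D_n`.
-/

theorem stirling2_eq_stirlingSecond : stirling2 = Nat.stirlingSecond := by
  funext n k
  induction n generalizing k with
  | zero => cases k <;> rfl
  | succ n ih =>
    cases k with
    | zero => rfl
    | succ k => simp only [stirling2, Nat.stirlingSecond_succ_succ, ih]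

theorem stirling1_succ_zero (n : ℕ) : stirling1 (n + 1) 0 = 0 := by
  induction n with
  | zero => rfl
  | succ n ih =>
    show -((n + 1 : ℕ) : ℤ) * stirling1 (n + 1) 0 = 0
    rw [ih, mul_zero]

theorem stirling1_succ_succ (n k : ℕ) :
    stirling1 (n + 1) (k + 1) = stirling1 n k - n * stirling1 n (k + 1) := rfl

-- Summing over any `N > n` lets the induction shift indices without trimming boundary terms.
theorem sum_stirling1_mul_stirlingSecond (n k : ℕ) {N : ℕ} (hN : n < N) :
    ∑ j ∈ range N, stirling1 n j * (Nat.stirlingSecond j k : ℤ) = if n = k then 1 else 0 := by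
  obtain ⟨N, rfl⟩ : ∃ N', N = N' + 1 := ⟨N - 1, by omega⟩
  induction n generalizing k N with
  | zero => cases k <;> simp [Finset.sum_range_succ', stirling1]
  | succ n ih =>
    obtain ⟨N, rfl⟩ : ∃ N', N = N' + 1 := ⟨N - 1, by omega⟩
    rw [Finset.sum_range_succ', stirling1_succ_zero, zero_mul, add_zero]
    cases k with
    | zero => simp
    | succ k =>
      have shifted : ∑ j ∈ range (N + 1), stirling1 n (j + 1) *
          (Nat.stirlingSecond (j + 1) (k + 1) : ℤ) = if n = k + 1 then 1 else 0 := by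
        rw [← ih (k + 1) (N + 1) (by omega), Finset.sum_range_succ' _ (N + 1)]
        simp
      have expand : ∀ j, stirling1 (n + 1) (j + 1) * (Nat.stirlingSecond (j + 1) (k + 1) : ℤ) =
          (k + 1) * (stirling1 n j * Nat.stirlingSecond j (k + 1)) +
            stirling1 n j * Nat.stirlingSecond j k -
            n * (stirling1 n (j + 1) * Nat.stirlingSecond (j + 1) (k + 1)) := by
        intro j
        rw [stirling1_succ_succ, Nat.stirlingSecond_succ_succ j k]
        push_cast
        ring
      simp only [expand, Finset.sum_sub_distrib, Finset.sum_add_distrib, ← Finset.mul_sum,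
        ih (k + 1) N (by omega), ih k N (by omega), shifted]
      split_ifs <;> omega

theorem bell_eq_sum_range {j N : ℕ} (hN : j < N) :
    (bell j : ℤ) = ∑ k ∈ range N, (Nat.stirlingSecond j k : ℤ) := by
  rw [bell, stirling2_eq_stirlingSecond, Nat.cast_sum]
  refine Finset.sum_subset (Finset.range_subset_range.mpr hN) fun k _ hk => ?_
  rw [Nat.stirlingSecond_eq_zero_of_lt (by simpa using hk), Nat.cast_zero]

theorem sum_stirling1_mul_bell {n N : ℕ} (hN : n < N) :
    ∑ j ∈ range N, stirling1 n j * (bell j : ℤ) = 1 := calc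
  _ = ∑ k ∈ range N, ∑ j ∈ range N, stirling1 n j * (Nat.stirlingSecond j k : ℤ) := by
    rw [Finset.sum_comm]
    refine Finset.sum_congr rfl fun j hj => ?_
    rw [bell_eq_sum_range (Finset.mem_range.mp hj), Finset.mul_sum]
  _ = 1 := by simp [sum_stirling1_mul_stirlingSecond n _ hN, Finset.mem_range.mpr hN]

theorem sum_stirling1_succ_succ_mul_bell_eq_one_sub {n N : ℕ} (hN : n < N) :
    ∑ j ∈ range N, stirling1 (n + 1) (j + 1) * (bell j : ℤ) =
      1 - n * ∑ j ∈ range N, stirling1 n (j + 1) * (bell j : ℤ) := by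
  simp only [stirling1_succ_succ, sub_mul, mul_assoc, Finset.sum_sub_distrib, ← Finset.mul_sum,
    sum_stirling1_mul_bell hN]

theorem sum_stirling1_succ_succ_mul_bell_eq_numDerangements {n N : ℕ} (hN : n < N) :
    ∑ j ∈ range N, stirling1 (n + 1) (j + 1) * (bell j : ℤ) =
      (-1) ^ n * (numDerangements n : ℤ) := by
  induction n generalizing N with
  | zero => simp [sum_stirling1_succ_succ_mul_bell_eq_one_sub hN]
  | succ n ih =>
    rw [sum_stirling1_succ_succ_mul_bell_eq_one_sub hN, ih (by omega), numDerangements_succ]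
    have sign_sq : ((-1 : ℤ) ^ n) ^ 2 = 1 := by rw [← pow_mul, pow_mul', neg_one_sq, one_pow]
    push_cast
    linear_combination -sign_sq

theorem stirling1_bell_derangement (m : ℕ) (hm : 1 ≤ m) :
    ∑ j ∈ Icc 1 m, stirling1 m j * (bell (j - 1) : ℤ) =
      (-1) ^ (m - 1) * (numDerangements (m - 1) : ℤ) := by
  obtain ⟨n, rfl⟩ : ∃ n, m = n + 1 := ⟨m - 1, by omega⟩
  rw [← Finset.Ico_add_one_right_eq_Icc, Finset.sum_Ico_eq_sum_range]
  simp only [Nat.add_sub_cancel, add_comm 1]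
  exact sum_stirling1_succ_succ_mul_bell_eq_numDerangements n.lt_succ_self
end

section
/- For every prime p and every integer n ≥ 0, B_{p+n} ≡ B_n + B_{n+1} (mod p) (Touchard's congruence), where B_k is the k-th Bell number. -/
open Polynomial Finset

theorem bell_eq_sum_stirlingSecond (m : ℕ) :
    bell m = ∑ j ∈ range (m + 1), Nat.stirlingSecond m j := by
  rw [bell, stirling2_eq_stirlingSecond]

theorem X_mul_descPochhammer {R : Type*} [Ring R] (k : ℕ) :
    X * descPochhammer R k = descPochhammer R (k + 1) + k • descPochhammer R k := by
  rw [descPochhammer_succ_right, mul_sub, ← (commute_X _).eq, nsmul_eq_mul,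
    ← (Nat.cast_commute _ _).eq]
  abel

theorem X_pow_eq_sum_stirlingSecond_nsmul_descPochhammer {R : Type*} [Ring R] (n : ℕ) :
    (X : R[X]) ^ n = ∑ k ∈ range (n + 1), Nat.stirlingSecond n k • descPochhammer R k := by
  induction n with
  | zero => simp
  | succ n ih =>
    have hshift : ∑ k ∈ range (n + 1), ((k + 1) * Nat.stirlingSecond n (k + 1)) •
        descPochhammer R (k + 1) = ∑ k ∈ range (n + 1), (k * Nat.stirlingSecond n k) •
        descPochhammer R k := by
      calc _ = ∑ k ∈ range (n + 2), (k * Nat.stirlingSecond n k) • descPochhammer R k := by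
            rw [sum_range_succ' _ (n + 1), zero_mul, zero_smul, add_zero]
        _ = _ := by rw [sum_range_succ, Nat.stirlingSecond_eq_zero_of_lt n.lt_succ_self]; simp
    calc (X : R[X]) ^ (n + 1)
        = ∑ k ∈ range (n + 1), Nat.stirlingSecond n k • (X * descPochhammer R k) := by
          rw [pow_succ', ih, mul_sum]
          exact sum_congr rfl fun k _ => mul_smul_comm _ _ _
      _ = ∑ k ∈ range (n + 1), Nat.stirlingSecond n k • descPochhammer R (k + 1)
          + ∑ k ∈ range (n + 1), ((k + 1) * Nat.stirlingSecond n (k + 1)) •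
            descPochhammer R (k + 1) := by
          simp only [X_mul_descPochhammer, hshift, smul_add, smul_smul, sum_add_distrib, mul_comm]
      _ = ∑ k ∈ range (n + 2), Nat.stirlingSecond (n + 1) k • descPochhammer R k := by
          simp only [sum_range_succ' _ (n + 1), Nat.stirlingSecond_succ_succ, add_smul,
            sum_add_distrib, Nat.stirlingSecond_succ_zero, zero_smul, add_zero]
          abel

noncomputable def bellFunctional (R : Type*) [CommRing R] : R[X] →ₗ[R] R :=
  lsum fun j => (bell j : R) • LinearMap.id

section BellFunctional

variable {R : Type*} [CommRing R]

theorem bellFunctional_X_pow (m : ℕ) : bellFunctional R (X ^ m) = bell m := by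
  simp [bellFunctional, X_pow_eq_monomial]

theorem bellFunctional_descPochhammer (k : ℕ) : bellFunctional R (descPochhammer R k) = 1 := by
  induction k using Nat.strong_induction_on with
  | _ k ih =>
    have hlower : ∑ j ∈ range k, bellFunctional R (Nat.stirlingSecond k j • descPochhammer R j)
        = ∑ j ∈ range k, (Nat.stirlingSecond k j : R) :=
      sum_congr rfl fun j hj => by rw [map_nsmul, ih j (mem_range.mp hj), nsmul_one]
    have hexpand := congrArg (bellFunctional R)
      (X_pow_eq_sum_stirlingSecond_nsmul_descPochhammer (R := R) k)
    rw [bellFunctional_X_pow, bell_eq_sum_stirlingSecond, map_sum, sum_range_succ, sum_range_succ,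
      hlower, Nat.stirlingSecond_self, one_nsmul] at hexpand
    push_cast at hexpand
    linear_combination -hexpand

end BellFunctional

theorem descPochhammer_add_of_charP {R : Type*} [Ring R] (p : ℕ) [CharP R p] (k : ℕ) :
    descPochhammer R (p + k) = descPochhammer R p * descPochhammer R k := by
  rw [← descPochhammer_mul, CharP.cast_eq_zero, sub_zero, comp_X]

namespace ZMod

variable (p : ℕ) [Fact p.Prime]

/-- Both sides are monic of degree `p` and vanish on all of `ZMod p`. -/
theorem descPochhammer_eq_X_pow_sub_X : descPochhammer (ZMod p) p = X ^ p - X := by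
  have hmonic : (X ^ p - X : (ZMod p)[X]).Monic :=
    monic_X_pow_sub (degree_X_le.trans_lt (by exact_mod_cast (Fact.out : p.Prime).one_lt))
  have hdegree : (X ^ p - X : (ZMod p)[X]).degree = p := by
    rw [degree_eq_natDegree hmonic.ne_zero,
      FiniteField.X_pow_card_sub_X_natDegree_eq _ (Fact.out : p.Prime).one_lt]
  have hdegree' : (descPochhammer (ZMod p) p).degree = p := by
    rw [degree_eq_natDegree (monic_descPochhammer _ p).ne_zero, descPochhammer_natDegree]
  refine eq_of_degree_le_of_eval_finset_eq univ (by rw [hdegree', card_univ, ZMod.card])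
    (hdegree'.trans hdegree.symm) ((monic_descPochhammer _ p).leadingCoeff.trans hmonic.symm)
    fun a _ => ?_
  rw [descPochhammer_eval_eq_prod_range, eval_sub, eval_pow, eval_X, ZMod.pow_card, sub_self]
  exact prod_eq_zero (mem_range.mpr a.val_lt) (by rw [ZMod.natCast_zmod_val, sub_self])

theorem X_pow_add_eq_sum_descPochhammer (n : ℕ) :
    (X : (ZMod p)[X]) ^ (p + n) =
      ∑ k ∈ range (n + 1), Nat.stirlingSecond n k • descPochhammer (ZMod p) (p + k)
        + X ^ (n + 1) := by
  calc (X : (ZMod p)[X]) ^ (p + n) = (descPochhammer (ZMod p) p + X) * X ^ n := by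
        rw [descPochhammer_eq_X_pow_sub_X]; ring
    _ = descPochhammer (ZMod p) p * ∑ k ∈ range (n + 1),
          Nat.stirlingSecond n k • descPochhammer (ZMod p) k + X ^ (n + 1) := by
        rw [add_mul, ← X_pow_eq_sum_stirlingSecond_nsmul_descPochhammer, pow_succ']
    _ = _ := by simp only [mul_sum, mul_smul_comm, descPochhammer_add_of_charP]

end ZMod

theorem bell_touchard (p : ℕ) (hp : p.Prime) (n : ℕ) :
    bell (p + n) ≡ bell n + bell (n + 1) [MOD p] := by
  have := Fact.mk hp
  rw [← ZMod.natCast_eq_natCast_iff, ← bellFunctional_X_pow,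
    ZMod.X_pow_add_eq_sum_descPochhammer, map_add, map_sum, bellFunctional_X_pow,
    bell_eq_sum_stirlingSecond n]
  simp only [map_nsmul, bellFunctional_descPochhammer, nsmul_one]
  push_cast
  rfl
end

section
/- For any integers n, m ≥ 0 and any prime p, the derangement numbers satisfy D_{pn+m} ≡ (−1)^n D_m (mod p). -/
open Polynomial Finset

lemma derangement_base (p : ℕ) (hp : p.Prime) :
    (numDerangements p : ZMod p) = -1 := by
  haveI : Fact p.Prime := ⟨hp⟩
  obtain ⟨q, rfl⟩ : ∃ q, p = q + 1 := ⟨p - 1, (Nat.succ_pred_eq_of_pos hp.pos).symm⟩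
  have h := numDerangements_succ q
  have h' : (numDerangements (q+1) : ZMod (q+1))
      = ((q+1 : ℕ) : ZMod (q+1)) * (numDerangements q : ZMod (q+1)) - (-1)^q := by
    exact_mod_cast congrArg (Int.cast : ℤ → ZMod (q+1)) h
  have hpow : (-1 : ZMod (q+1)) ^ (q+1) = -1 := neg_one_pow_char _ _
  have hq : (-1 : ZMod (q+1)) ^ q = 1 := by
    have := congrArg (· * (-1 : ZMod (q+1))) hpow
    simp only [pow_succ] at hpow ⊢
    linear_combination -hpow
  rw [h', ZMod.natCast_self, hq, zero_mul, zero_sub]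

lemma derangement_key (p : ℕ) (hp : p.Prime) (k : ℕ) :
    (numDerangements (k + p) : ZMod p) = -(numDerangements k : ZMod p) := by
  haveI : Fact p.Prime := ⟨hp⟩
  have hstep : ∀ j : ℕ, (numDerangements (j + 1) : ZMod p)
      = ((j+1 : ℕ) : ZMod p) * (numDerangements j : ZMod p) - (-1)^j := fun j => by
    exact_mod_cast congrArg (Int.cast : ℤ → ZMod p) (numDerangements_succ j)
  induction k using Nat.twoStepInduction with
  | zero => simpa using derangement_base p hp
  | one =>
    have h := hstep p
    rw [Nat.add_comm 1 p, h, derangement_base p hp]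
    have hpow : (-1 : ZMod p) ^ p = -1 := neg_one_pow_char _ _
    push_cast
    rw [CharP.cast_eq_zero (ZMod p) p, hpow]
    simp [numDerangements_one]
  | more k ih1 ih2 =>
    have he : k + 2 + p = (k + p) + 2 := by ring
    have h : (numDerangements ((k+p) + 2) : ZMod p)
        = ((k+p+1 : ℕ) : ZMod p) * ((numDerangements (k+p) : ZMod p)
          + (numDerangements (k+p+1) : ZMod p)) := by
      rw [numDerangements_add_two]; push_cast; ring
    have h2 : (numDerangements (k + 2) : ZMod p)
        = ((k+1 : ℕ) : ZMod p) * ((numDerangements k : ZMod p)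
          + (numDerangements (k+1) : ZMod p)) := by
      rw [numDerangements_add_two]; push_cast; ring
    have hk1 : k + p + 1 = (k + 1) + p := by ring
    rw [he, h, hk1, ih1, ih2, h2]
    push_cast
    rw [CharP.cast_eq_zero (ZMod p) p]
    ring

theorem derangement_mod_p (n m p : ℕ) (hp : p.Prime) :
    (numDerangements (p * n + m) : ℤ) ≡ (-1) ^ n * (numDerangements m : ℤ) [ZMOD p] := by
  haveI : Fact p.Prime := ⟨hp⟩
  rw [← ZMod.intCast_eq_intCast_iff]
  push_cast
  induction n with
  | zero => simp
  | succ n ih =>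
    have he : p * (n+1) + m = (p * n + m) + p := by ring
    rw [he, derangement_key p hp, ih]
    ring
end
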